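/- arXiv:1412.0251 — 4 statements merged into one kernel-verified Lean document; each statement's English description precedes it below -/
import Mathlib

section
/- Let u₀ : ℤ → ℝ be a discrete 1D signal and k₀ : ℤ → ℝ a kernel with k₀ ≥ 0 and Σ k₀ = 1. Define f = k₀ ∗ u₀ and J(u) = Σ_x |u[x+1] − u[x]| (discrete total variation, assuming u₀ has finite support variation, i.e., u₀ is eventually constant on both sides). Then J(f) ≤ J(u₀). -/
/-!
Differencing commutes with convolution, so `Δf = k₀ ∗ Δu₀`. Young's inequality in `ℓ¹`,
`‖k ∗ g‖₁ ≤ ‖k‖₁ ‖g‖₁` (swap the two sums and use translation invariance of `∑ₓ`), then gives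
`J f ≤ ‖k₀‖₁ J u₀ = J u₀`, since `‖k₀‖₁ = ∑ k₀ = 1` for `k₀ ≥ 0`. Eventual constancy of `u₀`
makes `Δu₀` finitely supported, so every `∑ᶠ` involved is a genuine finite sum rather than the
junk value `0`.
-/

open Function fwdDiff

section DiscreteConvolution

variable {G : Type*}

noncomputable def discreteConv [Sub G] (k u : G → ℝ) (x : G) : ℝ :=
  ∑ᶠ y, k y * u (x - y)

theorem finsum_comp_sub_right [AddGroup G] {M : Type*} [AddCommMonoid M] (g : G → M) (y : G) :
    ∑ᶠ x, g (x - y) = ∑ᶠ x, g x :=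
  finsum_comp_equiv (Equiv.subRight y)

theorem fwdDiff_discreteConv [AddCommGroup G] {k : G → ℝ} (hk : HasFiniteSupport k)
    (u : G → ℝ) (h : G) :
    Δ_[h] (discreteConv k u) = discreteConv k (Δ_[h] u) := by
  ext x
  simp only [fwdDiff, discreteConv]
  rw [← finsum_sub_distrib (hk.fun_mul_left _) (hk.fun_mul_left _)]
  simp only [mul_sub, sub_add_eq_add_sub]

theorem finsum_abs_discreteConv_le [AddGroup G] {k g : G → ℝ} (hk : HasFiniteSupport k)
    (hg : HasFiniteSupport g) :
    ∑ᶠ x, |discreteConv k g x| ≤ (∑ᶠ y, |k y|) * ∑ᶠ x, |g x| := by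
  set K := hk.toFinset
  have hconv (x : G) : discreteConv k g x = ∑ y ∈ K, k y * g (x - y) :=
    finsum_eq_sum_of_support_subset _ fun y hy ↦ hk.mem_toFinset.2 (left_ne_zero_of_mul hy)
  have hshift (y : G) : HasFiniteSupport fun x ↦ g (x - y) :=
    hg.comp_of_injective (sub_left_injective (b := y))
  have hterm (y : G) : HasFiniteSupport fun x ↦ |k y| * |g (x - y)| :=
    ((hshift y).comp abs_zero).fun_mul_right _
  have hle (x : G) : |discreteConv k g x| ≤ ∑ y ∈ K, |k y| * |g (x - y)| := by
    simp only [hconv, ← abs_mul]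
    exact Finset.abs_sum_le_sum_abs _ _
  calc ∑ᶠ x, |discreteConv k g x|
      ≤ ∑ᶠ x, ∑ y ∈ K, |k y| * |g (x - y)| := by
        refine finsum_le_finsum' ?_ (HasFiniteSupport.sum hterm K) hle
        simp only [hconv]
        exact (HasFiniteSupport.sum (fun y ↦ (hshift y).fun_mul_right _) K).comp abs_zero
    _ = ∑ y ∈ K, |k y| * ∑ᶠ x, |g x| := by
        rw [finsum_sum_comm _ _ fun y _ ↦ hterm y]
        simp only [← mul_finsum, finsum_comp_sub_right (fun x ↦ |g x|)]
    _ = (∑ᶠ y, |k y|) * ∑ᶠ x, |g x| := by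
        rw [← Finset.sum_mul, finsum_eq_sum_of_support_subset (fun y ↦ |k y|)]
        exact fun y hy ↦ hk.mem_toFinset.2 (abs_ne_zero.1 hy)

end DiscreteConvolution

theorem hasFiniteSupport_fwdDiff_one_of_eventually_const {M : Type*} [AddCommGroup M]
    {u : ℤ → M} {A B : M} {N : ℤ} (hA : ∀ x ≤ -N, u x = A) (hB : ∀ x ≥ N, u x = B) :
    HasFiniteSupport (Δ_[1] u) := by
  refine (Set.finite_Ico (-N) N).subset fun x hx ↦ Set.mem_Ico.2 ⟨?_, ?_⟩ <;> by_contra! h <;>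
    apply hx
  · simp [fwdDiff, hA x (by omega), hA (x + 1) (by omega)]
  · simp [fwdDiff, hB x (by omega), hB (x + 1) (by omega)]

/-- The discrete total variation of a blurred signal is no larger than that of the
sharp signal, for a nonnegative kernel summing to one. -/
theorem tv_blur_le (u₀ k₀ : ℤ → ℝ)
    (hk0 : ∀ y, 0 ≤ k₀ y) (hkfin : (Function.support k₀).Finite)
    (hk1 : ∑ᶠ y, k₀ y = 1)
    (hconst : ∃ (A B : ℝ) (N : ℤ), (∀ x ≤ -N, u₀ x = A) ∧ ∀ x ≥ N, u₀ x = B)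
    (f : ℤ → ℝ) (hf : ∀ x, f x = ∑ᶠ y, k₀ y * u₀ (x - y)) :
    ∑ᶠ x : ℤ, |f (x + 1) - f x| ≤ ∑ᶠ x : ℤ, |u₀ (x + 1) - u₀ x| := by
  obtain ⟨A, B, N, hA, hB⟩ := hconst
  have hf_eq : f = discreteConv k₀ u₀ := funext hf
  have hΔf : Δ_[1] f = discreteConv k₀ (Δ_[1] u₀) := hf_eq ▸ fwdDiff_discreteConv hkfin u₀ 1
  calc ∑ᶠ x : ℤ, |f (x + 1) - f x| = ∑ᶠ x, |discreteConv k₀ (Δ_[1] u₀) x| := by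
        simp only [← hΔf, fwdDiff]
    _ ≤ (∑ᶠ y, |k₀ y|) * ∑ᶠ x, |Δ_[1] u₀ x| :=
        finsum_abs_discreteConv_le hkfin (hasFiniteSupport_fwdDiff_one_of_eventually_const hA hB)
    _ = ∑ᶠ x : ℤ, |u₀ (x + 1) - u₀ x| := by
        simp only [abs_of_nonneg (hk0 _), hk1, one_mul, fwdDiff]
end

section
/- Let f_x : ℤ → ℝ satisfy f_x[−2] = δ₁Δ, f_x[−1] = (1 − δ₁ − δ₂)Δ, f_x[0] = δ₂Δ, and f_x[x] = 0 otherwise, where Δ = U₂ − U₁ > 0, δ₁, δ₂ ≥ 0, δ₁ + δ₂ ≤ 1. Suppose 1 > max(2δ₁ + δ₂, 2δ₂ + δ₁) and λ ≥ Δ · max(δ₁, δ₂). Then the coordinatewise soft-thresholding solution û_x[x] = sign(f_x[x]) max(|f_x[x]| − λ, 0) of the problem min_{u_x} (1/2) Σ_x (u_x[x] − f_x[x])² + λ Σ_x |u_x[x]| is supported only at x = −1, where it equals (1 − δ₁ − δ₂ − max(δ₁, δ₂)) Δ if λ = Δ·max(δ₁,δ₂); more generally û_x[−1] = max((1 − δ₁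 − δ₂)Δ − λ, 0) and û_x[x] = 0 for x ≠ −1 whenever λ ≥ Δ·max(δ₁, δ₂) and λ < (1 − δ₁ − δ₂)Δ. -/
noncomputable def softThreshold (lam y : ℝ) : ℝ := Real.sign y * max (|y| - lam) 0

theorem softThreshold_eq_zero_of_abs_le {lam y : ℝ} (h : |y| ≤ lam) : softThreshold lam y = 0 := by
  rw [softThreshold, max_eq_right (sub_nonpos.2 h), mul_zero]

theorem softThreshold_of_pos {lam y : ℝ} (hy : 0 < y) : softThreshold lam y = max (y - lam) 0 := by
  rw [softThreshold, Real.sign_of_pos hy, abs_of_pos hy, one_mul]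

theorem soft_threshold_center_general (Δ δ₁ δ₂ lam : ℝ) (hΔ : 0 < Δ)
    (h1 : 0 ≤ δ₁) (h2 : 0 ≤ δ₂)
    (hlam1 : Δ * max δ₁ δ₂ ≤ lam) (hlam2 : lam < (1 - δ₁ - δ₂) * Δ)
    (fx : ℤ → ℝ)
    (hfm2 : fx (-2) = δ₁ * Δ) (hfm1 : fx (-1) = (1 - δ₁ - δ₂) * Δ) (hf0 : fx 0 = δ₂ * Δ)
    (hfz : ∀ x : ℤ, x ≠ -2 → x ≠ -1 → x ≠ 0 → fx x = 0)
    (ux : ℤ → ℝ) (hux : ∀ x, ux x = Real.sign (fx x) * max (|fx x| - lam) 0) :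
    (∀ x : ℤ, x ≠ -1 → ux x = 0) ∧
    ux (-1) = max ((1 - δ₁ - δ₂) * Δ - lam) 0 ∧
    (lam = Δ * max δ₁ δ₂ → ux (-1) = (1 - δ₁ - δ₂ - max δ₁ δ₂) * Δ) := by
  have hsoft : ∀ x, ux x = softThreshold lam (fx x) := hux
  have hlam_nonneg : 0 ≤ lam := (mul_nonneg hΔ.le (le_max_of_le_left h1)).trans hlam1
  have hside : ∀ δ, 0 ≤ δ → δ ≤ max δ₁ δ₂ → |δ * Δ| ≤ lam := fun δ hδ hδmax => by
    rw [abs_of_nonneg (mul_nonneg hδ hΔ.le)]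
    nlinarith
  have hedge : ux (-1) = max ((1 - δ₁ - δ₂) * Δ - lam) 0 := by
    rw [hsoft, softThreshold_of_pos (by linarith), hfm1]
  refine ⟨fun x hx => ?_, hedge, fun hlam => ?_⟩
  · rw [hsoft]
    apply softThreshold_eq_zero_of_abs_le
    by_cases hm2 : x = -2
    · rw [hm2, hfm2]; exact hside δ₁ h1 (le_max_left _ _)
    by_cases h0 : x = 0
    · rw [h0, hf0]; exact hside δ₂ h2 (le_max_right _ _)
    rwa [hfz x hm2 hx h0, abs_zero]
  · rw [hedge, max_eq_left (by linarith), hlam]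
    ring

/-- Gradient-domain TV denoising of a blurred step via soft-thresholding yields a
signal supported only at the true edge position `x = -1`. -/
theorem soft_threshold_center (Δ δ₁ δ₂ lam : ℝ) (hΔ : 0 < Δ)
    (h1 : 0 ≤ δ₁) (h2 : 0 ≤ δ₂) (h12 : δ₁ + δ₂ ≤ 1)
    (hc : 1 > max (2*δ₁ + δ₂) (2*δ₂ + δ₁))
    (hlam1 : Δ * max δ₁ δ₂ ≤ lam) (hlam2 : lam < (1 - δ₁ - δ₂) * Δ)
    (fx : ℤ → ℝ)
    (hfm2 : fx (-2) = δ₁ * Δ) (hfm1 : fx (-1) = (1 - δ₁ - δ₂) * Δ) (hf0 : fx 0 = δ₂ * Δ)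
    (hfz : ∀ x : ℤ, x ≠ -2 → x ≠ -1 → x ≠ 0 → fx x = 0)
    (ux : ℤ → ℝ) (hux : ∀ x, ux x = Real.sign (fx x) * max (|fx x| - lam) 0) :
    (∀ x : ℤ, x ≠ -1 → ux x = 0) ∧
    ux (-1) = max ((1 - δ₁ - δ₂) * Δ - lam) 0 ∧
    (lam = Δ * max δ₁ δ₂ → ux (-1) = (1 - δ₁ - δ₂ - max δ₁ δ₂) * Δ) :=
  soft_threshold_center_general Δ δ₁ δ₂ lam hΔ h1 h2 hlam1 hlam2 fx hfm2 hfm1 hf0 hfz ux hux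
end

section
/- Let û be a two-level step signal: û[x] = Û₁ for x ∈ [−L₁, −1], û[x] = Û₂ for x ∈ [0, L₂], and let f be the blurred step f[x] = U₁ for x ∈ [−L₁+1, −2], f[−1] = U₁ + δ₁(U₂−U₁), f[0] = U₂ − δ₂(U₂−U₁), f[x] = U₂ for x ∈ [1, L₂−1]. Suppose Û₁ ≥ U₁ + δ₁(U₂−U₁) and Û₂ ≤ U₂ − δ₂(U₂−U₁), U₁ < U₂, Û₁ < Û₂. Then over all 3-tap kernels k parameterized by k[1] = d₁, k[−1] = d₂, k[0] = 1 − d₁ − d₂ with d₁, d₂ ≥ 0, d₁ + d₂ ≤ 1, the cost Σ_{x=−L₁+1}^{L₂−1} ((k ∗ û)[x] − f[x])² is minimized at d₁ = d₂ = 0, i.e., k equals the Dirac delta. -/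
/-!
The cost is compared term by term with the cost of the Dirac kernel.
Away from the jump the kernel sees a constant signal, so the residual does not depend on it.
At the two pixels next to the jump the kernel moves the value `V₁` (resp. `V₂`) towards the
other level, while the sign conditions put `f (-1)` below `V₁` and `f 0` above `V₂`: blurring
only moves the prediction further away from the data.
-/

open Set

/-- The 3-tap kernel with `k[1] = d₁`, `k[-1] = d₂` and `k[0] = 1 - d₁ - d₂`, applied to `u`. -/
def threeTapConv (d₁ d₂ : ℝ) (u : ℤ → ℝ) (x : ℤ) : ℝ :=
  d₁ * u (x - 1) + d₂ * u (x + 1) + (1 - d₁ - d₂) * u x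

section threeTapConv

variable {d₁ d₂ a b : ℝ} {u : ℤ → ℝ} {x : ℤ}

theorem threeTapConv_zero_zero (u : ℤ → ℝ) (x : ℤ) : threeTapConv 0 0 u x = u x := by
  simp [threeTapConv]

theorem threeTapConv_of_flat (hl : u (x - 1) = a) (hc : u x = a) (hr : u (x + 1) = a) :
    threeTapConv d₁ d₂ u x = a := by
  rw [threeTapConv, hl, hc, hr]
  ring

theorem threeTapConv_of_left_foot (hl : u (x - 1) = a) (hc : u x = a) (hr : u (x + 1) = b) :
    threeTapConv d₁ d₂ u x = a + d₂ * (b - a) := by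
  rw [threeTapConv, hl, hc, hr]
  ring

theorem threeTapConv_of_right_foot (hl : u (x - 1) = a) (hc : u x = b) (hr : u (x + 1) = b) :
    threeTapConv d₁ d₂ u x = b - d₁ * (b - a) := by
  rw [threeTapConv, hl, hc, hr]
  ring

end threeTapConv

theorem sq_sub_le_sq_sub_of_mem_uIcc {a b c : ℝ} (h : a ∈ uIcc c b) :
    (a - c) ^ 2 ≤ (b - c) ^ 2 :=
  sq_le_sq.2 (abs_sub_left_of_mem_uIcc h)

theorem am_kernel_step_dirac_general (L₁ L₂ : ℤ)
    (U₁ U₂ V₁ V₂ δ₁ δ₂ : ℝ) (hV : V₁ < V₂)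
    (hV1 : U₁ + δ₁ * (U₂ - U₁) ≤ V₁) (hV2 : V₂ ≤ U₂ - δ₂ * (U₂ - U₁))
    (uh f : ℤ → ℝ)
    (huh1 : ∀ x, -L₁ ≤ x → x ≤ -1 → uh x = V₁)
    (huh2 : ∀ x, 0 ≤ x → x ≤ L₂ → uh x = V₂)
    (hfm1 : f (-1) = U₁ + δ₁ * (U₂ - U₁))
    (hf0 : f 0 = U₂ - δ₂ * (U₂ - U₁))
    (C : ℝ → ℝ → ℝ)
    (hC : ∀ d₁ d₂, C d₁ d₂ = ∑ x ∈ Finset.Icc (-L₁ + 1) (L₂ - 1),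
      ((d₁ * uh (x - 1) + d₂ * uh (x + 1) + (1 - d₁ - d₂) * uh x) - f x)^2) :
    ∀ d₁ d₂ : ℝ, 0 ≤ d₁ → 0 ≤ d₂ → d₁ + d₂ ≤ 1 → C 0 0 ≤ C d₁ d₂ := by
  intro d₁ d₂ hd₁ hd₂ _
  have hC' : ∀ d₁ d₂, C d₁ d₂ = ∑ x ∈ Finset.Icc (-L₁ + 1) (L₂ - 1),
      (threeTapConv d₁ d₂ uh x - f x) ^ 2 := hC
  rw [hC', hC']
  refine Finset.sum_le_sum fun x hx => ?_
  obtain ⟨hxl, hxr⟩ := Finset.mem_Icc.1 hx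
  have hjump : 0 ≤ V₂ - V₁ := sub_nonneg.2 hV.le
  rw [threeTapConv_zero_zero]
  rcases lt_trichotomy x (-1) with hx | rfl | hx
  · rw [threeTapConv_of_flat (huh1 _ (by omega) (by omega)) (huh1 x (by omega) (by omega))
      (huh1 _ (by omega) (by omega)), huh1 x (by omega) (by omega)]
  · rw [threeTapConv_of_left_foot (huh1 _ (by omega) (by omega)) (huh1 _ (by omega) le_rfl)
      (huh2 _ le_rfl (by omega)), huh1 _ (by omega) le_rfl]
    exact sq_sub_le_sq_sub_of_mem_uIcc <|
      mem_uIcc_of_le (hfm1 ▸ hV1) (le_add_of_nonneg_right (mul_nonneg hd₂ hjump))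
  rcases (by omega : x = 0 ∨ 1 ≤ x) with rfl | hx
  · rw [threeTapConv_of_right_foot (huh1 _ (by omega) le_rfl) (huh2 _ le_rfl (by omega))
      (huh2 _ (by omega) (by omega)), huh2 _ le_rfl (by omega)]
    exact sq_sub_le_sq_sub_of_mem_uIcc <|
      mem_uIcc_of_ge (sub_le_self _ (mul_nonneg hd₁ hjump)) (hf0 ▸ hV2)
  · rw [threeTapConv_of_flat (huh2 _ (by omega) (by omega)) (huh2 x (by omega) (by omega))
      (huh2 _ (by omega) (by omega)), huh2 x (by omega) (by omega)]

/-- AM kernel step stuck at no-blur: among nonnegative sum-to-one 3-tap kernels, the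
data-fitting cost of matching the blurred step with the TV-denoised step is minimized
by the Dirac delta (`d₁ = d₂ = 0`). -/
theorem am_kernel_step_dirac (L₁ L₂ : ℤ) (hL₁ : 2 < L₁) (hL₂ : 2 < L₂)
    (U₁ U₂ V₁ V₂ δ₁ δ₂ : ℝ) (hU : U₁ < U₂) (hV : V₁ < V₂)
    (h1 : 0 ≤ δ₁) (h2 : 0 ≤ δ₂) (h12 : δ₁ + δ₂ ≤ 1)
    (hV1 : U₁ + δ₁ * (U₂ - U₁) ≤ V₁) (hV2 : V₂ ≤ U₂ - δ₂ * (U₂ - U₁))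
    (uh f : ℤ → ℝ)
    (huh1 : ∀ x, -L₁ ≤ x → x ≤ -1 → uh x = V₁)
    (huh2 : ∀ x, 0 ≤ x → x ≤ L₂ → uh x = V₂)
    (hf1 : ∀ x, -L₁ + 1 ≤ x → x ≤ -2 → f x = U₁)
    (hfm1 : f (-1) = U₁ + δ₁ * (U₂ - U₁))
    (hf0 : f 0 = U₂ - δ₂ * (U₂ - U₁))
    (hf2 : ∀ x, 1 ≤ x → x ≤ L₂ - 1 → f x = U₂)
    (C : ℝ → ℝ → ℝ)
    (hC : ∀ d₁ d₂, C d₁ d₂ = ∑ x ∈ Finset.Icc (-L₁ + 1) (L₂ - 1),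
      ((d₁ * uh (x - 1) + d₂ * uh (x + 1) + (1 - d₁ - d₂) * uh x) - f x)^2) :
    ∀ d₁ d₂ : ℝ, 0 ≤ d₁ → 0 ≤ d₂ → d₁ + d₂ ≤ 1 → C 0 0 ≤ C d₁ d₂ :=
  am_kernel_step_dirac_general L₁ L₂ U₁ U₂ V₁ V₂ δ₁ δ₂ hV hV1 hV2 uh f huh1 huh2 hfm1 hf0 C hC
end

section
/- Let f be the blurred step from the 3-tap model (f = U₁ on [−L₁+1,−2], f[−1] = U₁ + δ₁Δ, f[0] = U₂ − δ₂Δ, f = U₂ on [1,L₂−1], Δ = U₂ − U₁ > 0, L₁, L₂ > 2). Suppose λ satisfies Δ·max((L₁−2)δ₁, (L₂−1)δ₂) ≤ λ < Δ·(L₂(L₁−1) − L₂δ₁ − (L₁−1)δ₂)/(L₁+L₂−1). Then the two-level signal û with û = U₁ + (δ₁Δ + λ)/(L₁−1) on [−L₁+1, −1] and û = U₂ − (δ₂Δ + λ)/L₂ on [0, L₂−1] satisfies the subgradient optimality conditions for the 1D TV denoising problem min_u (1/2)Σ_{x=−L₁+1}^{L₂−1}(u[x] − f[x])² + λ Σ_{x=−L₁+1}^{L₂−2}|u[x+1]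 − u[x]|, and hence is its unique minimizer. -/
/-!
Optimality is certified by a discrete dual variable `p` on the edges: `p` vanishes just outside
the domain, its backward difference is the residual `uh - f`, `|p| ≤ λ`, and `p` equals
`λ · sign` of the jump wherever `uh` jumps. Summation by parts then gives
`F u = F uh + ½ ∑ (u - uh)² + ∑ (λ |Du| - p Du)`, and the last sum is nonnegative, which yields
both minimality and uniqueness. For the blurred step, `p` is linear on each plateau and equals `λ`
on the jump edge; the two bounds on `λ` say exactly that `0 ≤ p ≤ λ` and that the jump of `uh`
stays positive.
-/

open Finset

theorem Finset.sum_Icc_by_parts {R : Type*} [CommRing R] (p g : ℤ → R) {m n : ℤ}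
    (hmn : m ≤ n) :
    ∑ x ∈ Icc m n, (p x - p (x - 1)) * g x =
      p n * g n - p (m - 1) * g m + ∑ x ∈ Icc m (n - 1), p x * (g x - g (x + 1)) := by
  obtain ⟨k, rfl⟩ : ∃ k, n = k + 1 := ⟨n - 1, by ring⟩
  rw [add_sub_cancel_right]
  replace hmn : m - 1 ≤ k := by omega
  induction k, hmn using Int.leInduction with
  | base => simp [sub_mul]
  | succ k hk ih =>
    rw [← insert_Icc_right_eq_Icc_add_one (b := k + 1) (by omega), sum_insert (by simp), ih,
      ← insert_Icc_right_eq_Icc_add_one (b := k) (by omega), sum_insert (by simp),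
      add_sub_cancel_right]
    ring

theorem Finset.sum_Icc_by_parts_of_eq_zero {R : Type*} [CommRing R] {p : ℤ → R}
    (g : ℤ → R) {m n : ℤ} (hm : p (m - 1) = 0) (hn : p n = 0) :
    ∑ x ∈ Icc m n, (p x - p (x - 1)) * g x = ∑ x ∈ Icc m (n - 1), p x * (g x - g (x + 1)) := by
  rcases le_or_gt m n with hmn | hmn
  · rw [sum_Icc_by_parts p g hmn, hm, hn]
    ring
  · rw [Icc_eq_empty_of_lt hmn, Icc_eq_empty_of_lt (by omega), sum_empty, sum_empty]

section TVDenoising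

variable (f : ℤ → ℝ) (lam : ℝ) (m n : ℤ)

noncomputable def tvEnergy (u : ℤ → ℝ) : ℝ :=
  (1 / 2) * ∑ x ∈ Icc m n, (u x - f x) ^ 2 + lam * ∑ x ∈ Icc m (n - 1), |u (x + 1) - u x|

structure IsTVDualCertificate (uh p : ℤ → ℝ) : Prop where
  abs_le : ∀ x ∈ Icc m (n - 1), |p x| ≤ lam
  left_eq_zero : p (m - 1) = 0
  right_eq_zero : p n = 0
  sub_eq_residual : ∀ x ∈ Icc m n, p x - p (x - 1) = uh x - f x
  mul_sub_eq : ∀ x ∈ Icc m (n - 1), p x * (uh (x + 1) - uh x) = lam * |uh (x + 1) - uh x|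

variable {f lam m n} {uh p : ℤ → ℝ}

namespace IsTVDualCertificate

theorem tvEnergy_eq (hc : IsTVDualCertificate f lam m n uh p) (u : ℤ → ℝ) :
    tvEnergy f lam m n u = tvEnergy f lam m n uh + (1 / 2) * ∑ x ∈ Icc m n, (u x - uh x) ^ 2 +
      ∑ x ∈ Icc m (n - 1), (lam * |u (x + 1) - u x| - p x * (u (x + 1) - u x)) := by
  have hsq : ∑ x ∈ Icc m n, (u x - f x) ^ 2 = ∑ x ∈ Icc m n, (uh x - f x) ^ 2 +
      ∑ x ∈ Icc m n, (u x - uh x) ^ 2 + 2 * ∑ x ∈ Icc m n, (uh x - f x) * (u x - uh x) := by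
    rw [mul_sum, ← sum_add_distrib, ← sum_add_distrib]
    exact sum_congr rfl fun _ _ => by ring
  have hcross : ∑ x ∈ Icc m n, (uh x - f x) * (u x - uh x) =
      lam * ∑ x ∈ Icc m (n - 1), |uh (x + 1) - uh x| -
        ∑ x ∈ Icc m (n - 1), p x * (u (x + 1) - u x) :=
    calc ∑ x ∈ Icc m n, (uh x - f x) * (u x - uh x)
        = ∑ x ∈ Icc m n, (p x - p (x - 1)) * (u x - uh x) :=
          sum_congr rfl fun x hx => by rw [hc.sub_eq_residual x hx]
      _ = ∑ x ∈ Icc m (n - 1), p x * ((u x - uh x) - (u (x + 1) - uh (x + 1))) :=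
          sum_Icc_by_parts_of_eq_zero _ hc.left_eq_zero hc.right_eq_zero
      _ = ∑ x ∈ Icc m (n - 1), (p x * (uh (x + 1) - uh x) - p x * (u (x + 1) - u x)) :=
          sum_congr rfl fun _ _ => by ring
      _ = _ := by rw [sum_sub_distrib, mul_sum, sum_congr rfl hc.mul_sub_eq]
  rw [tvEnergy, tvEnergy, sum_sub_distrib, hsq, ← mul_sum]
  linear_combination hcross

theorem sum_mul_abs_sub_mul_nonneg (hc : IsTVDualCertificate f lam m n uh p) (u : ℤ → ℝ) :
    0 ≤ ∑ x ∈ Icc m (n - 1), (lam * |u (x + 1) - u x| - p x * (u (x + 1) - u x)) :=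
  sum_nonneg fun x hx => sub_nonneg.mpr <| calc
    p x * (u (x + 1) - u x) ≤ |p x| * |u (x + 1) - u x| := (le_abs_self _).trans (abs_mul _ _).le
    _ ≤ lam * |u (x + 1) - u x| := mul_le_mul_of_nonneg_right (hc.abs_le x hx) (abs_nonneg _)

theorem tvEnergy_le (hc : IsTVDualCertificate f lam m n uh p) (u : ℤ → ℝ) :
    tvEnergy f lam m n uh ≤ tvEnergy f lam m n u := by
  have hsq : 0 ≤ ∑ x ∈ Icc m n, (u x - uh x) ^ 2 := sum_nonneg fun _ _ => sq_nonneg _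
  linarith [hc.tvEnergy_eq u, hc.sum_mul_abs_sub_mul_nonneg u]

theorem eqOn_of_tvEnergy_eq (hc : IsTVDualCertificate f lam m n uh p) {u : ℤ → ℝ}
    (hu : tvEnergy f lam m n u = tvEnergy f lam m n uh) : ∀ x ∈ Icc m n, u x = uh x := by
  have hsq : ∑ x ∈ Icc m n, (u x - uh x) ^ 2 = 0 := by
    have := sum_nonneg fun x (_ : x ∈ Icc m n) => sq_nonneg (u x - uh x)
    linarith [hc.tvEnergy_eq u, hc.sum_mul_abs_sub_mul_nonneg u]
  intro x hx
  rw [← sub_eq_zero, ← sq_eq_zero_iff]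
  exact (sum_eq_zero_iff_of_nonneg fun _ _ => sq_nonneg _).mp hsq x hx

end IsTVDualCertificate

end TVDenoising

section BlurredStep

variable {L₁ L₂ : ℤ} {U₁ U₂ c₁ c₂ lam a b : ℝ} {f uh : ℤ → ℝ}

-- The running sum of the residual `uh - f` from the left end of the domain.
noncomputable def blurredStepDual (L₁ : ℤ) (lam c₂ a b : ℝ) (x : ℤ) : ℝ :=
  if x ≤ -2 then (x + L₁) * a else if x = -1 then lam else lam + c₂ - (x + 1) * b

theorem blurredStepDual_of_le {x : ℤ} (hx : x ≤ -2) :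
    blurredStepDual L₁ lam c₂ a b x = (x + L₁) * a :=
  if_pos hx

theorem blurredStepDual_neg_one : blurredStepDual L₁ lam c₂ a b (-1) = lam := by
  simp [blurredStepDual]

theorem blurredStepDual_of_nonneg {x : ℤ} (hx : 0 ≤ x) :
    blurredStepDual L₁ lam c₂ a b x = lam + c₂ - (x + 1) * b := by
  rw [blurredStepDual, if_neg (by omega), if_neg (by omega)]

theorem blurredStepDual_mem_Icc (hL₁ : 2 ≤ L₁) (ha : 0 ≤ a) (ha_le : (L₁ - 2) * a ≤ lam)
    (hb : 0 ≤ b) (hb_def : b * L₂ = c₂ + lam) (hc₂ : c₂ ≤ b) :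
    ∀ x ∈ Icc (-L₁ + 1) (L₂ - 2), blurredStepDual L₁ lam c₂ a b x ∈ Set.Icc 0 lam := by
  intro x hx
  rw [mem_Icc] at hx
  have hlam : 0 ≤ lam := le_trans (mul_nonneg (sub_nonneg.mpr (by exact_mod_cast hL₁)) ha) ha_le
  rcases lt_trichotomy x (-1) with hx' | rfl | hx'
  · rw [blurredStepDual_of_le (by omega)]
    have h1 : (0 : ℝ) ≤ x + L₁ := by exact_mod_cast (by omega : 0 ≤ x + L₁)
    have h2 : (x : ℝ) + L₁ ≤ L₁ - 2 := by exact_mod_cast (by omega : x + L₁ ≤ L₁ - 2)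
    exact ⟨mul_nonneg h1 ha, (mul_le_mul_of_nonneg_right h2 ha).trans ha_le⟩
  · rw [blurredStepDual_neg_one]
    exact ⟨hlam, le_rfl⟩
  · rw [blurredStepDual_of_nonneg (by omega)]
    have h1 : (1 : ℝ) ≤ x + 1 := by exact_mod_cast (by omega : 1 ≤ x + 1)
    have h2 : (x : ℝ) + 1 ≤ L₂ := by exact_mod_cast (by omega : x + 1 ≤ L₂)
    constructor <;> nlinarith

theorem blurredStepDual_sub_eq_residual
    (hf₁ : ∀ x, -L₁ + 1 ≤ x → x ≤ -2 → f x = U₁) (hfm₁ : f (-1) = U₁ + c₁)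
    (hf₀ : f 0 = U₂ - c₂) (hf₂ : ∀ x, 1 ≤ x → x ≤ L₂ - 1 → f x = U₂)
    (huh₁ : ∀ x, -L₁ + 1 ≤ x → x ≤ -1 → uh x = U₁ + a)
    (huh₂ : ∀ x, 0 ≤ x → x ≤ L₂ - 1 → uh x = U₂ - b) (ha_def : a * (L₁ - 1) = c₁ + lam) :
    ∀ x ∈ Icc (-L₁ + 1) (L₂ - 1),
      blurredStepDual L₁ lam c₂ a b x - blurredStepDual L₁ lam c₂ a b (x - 1) = uh x - f x := by
  intro x hx
  rw [mem_Icc] at hx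
  rcases (by omega : x ≤ -2 ∨ x = -1 ∨ x = 0 ∨ 1 ≤ x) with hx' | rfl | rfl | hx'
  · rw [blurredStepDual_of_le hx', blurredStepDual_of_le (by omega), hf₁ x hx.1 hx',
      huh₁ x hx.1 (by omega)]
    push_cast
    ring
  · rw [blurredStepDual_neg_one, show (-1 - 1 : ℤ) = -2 by norm_num, blurredStepDual_of_le le_rfl,
      hfm₁, huh₁ _ (by omega) le_rfl]
    push_cast
    linear_combination -ha_def
  · rw [blurredStepDual_of_nonneg le_rfl, zero_sub, blurredStepDual_neg_one, hf₀,
      huh₂ 0 le_rfl (by omega)]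
    push_cast
    ring
  · rw [blurredStepDual_of_nonneg (by omega), blurredStepDual_of_nonneg (by omega),
      hf₂ x hx' hx.2, huh₂ x (by omega) hx.2]
    push_cast
    ring

theorem isTVDualCertificate_blurredStepDual (hL₁ : 2 ≤ L₁) (hL₂ : 1 ≤ L₂)
    (hf₁ : ∀ x, -L₁ + 1 ≤ x → x ≤ -2 → f x = U₁) (hfm₁ : f (-1) = U₁ + c₁)
    (hf₀ : f 0 = U₂ - c₂) (hf₂ : ∀ x, 1 ≤ x → x ≤ L₂ - 1 → f x = U₂)
    (huh₁ : ∀ x, -L₁ + 1 ≤ x → x ≤ -1 → uh x = U₁ + a)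
    (huh₂ : ∀ x, 0 ≤ x → x ≤ L₂ - 1 → uh x = U₂ - b)
    (ha_def : a * (L₁ - 1) = c₁ + lam) (hb_def : b * L₂ = c₂ + lam)
    (ha : 0 ≤ a) (hb : 0 ≤ b) (ha_le : (L₁ - 2) * a ≤ lam) (hc₂ : c₂ ≤ b)
    (hjump : a + b ≤ U₂ - U₁) :
    IsTVDualCertificate f lam (-L₁ + 1) (L₂ - 1) uh (blurredStepDual L₁ lam c₂ a b) where
  abs_le x hx := by
    obtain ⟨h0, hle⟩ := blurredStepDual_mem_Icc hL₁ ha ha_le hb hb_def hc₂ x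
      (by rwa [show L₂ - 2 = L₂ - 1 - 1 by ring])
    exact abs_le.mpr ⟨by linarith, hle⟩
  left_eq_zero := by
    rw [blurredStepDual_of_le (by omega)]
    push_cast
    ring
  right_eq_zero := by
    rw [blurredStepDual_of_nonneg (by omega)]
    push_cast
    linear_combination -hb_def
  sub_eq_residual := blurredStepDual_sub_eq_residual hf₁ hfm₁ hf₀ hf₂ huh₁ huh₂ ha_def
  mul_sub_eq x hx := by
    rw [mem_Icc] at hx
    rcases eq_or_ne x (-1) with rfl | hx'
    · rw [blurredStepDual_neg_one, neg_add_cancel, huh₂ 0 le_rfl (by omega),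
        huh₁ (-1) (by omega) le_rfl, abs_of_nonneg (by linarith)]
    · have hflat : uh (x + 1) - uh x = 0 := by
        rcases (by omega : x ≤ -2 ∨ 0 ≤ x) with hx'' | hx''
        · rw [huh₁ (x + 1) (by omega) (by omega), huh₁ x hx.1 (by omega), sub_self]
        · rw [huh₂ (x + 1) (by omega) (by omega), huh₂ x hx'' (by omega), sub_self]
      rw [hflat, abs_zero, mul_zero, mul_zero]

end BlurredStep

theorem blurredStep_contraction_add_lt {L₁ L₂ Δ δ₁ δ₂ lam : ℝ} (hL₁ : 1 < L₁) (hL₂ : 0 < L₂)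
    (hlam : lam < Δ * ((L₂ * (L₁ - 1) - L₂ * δ₁ - (L₁ - 1) * δ₂) / (L₁ + L₂ - 1))) :
    (δ₁ * Δ + lam) / (L₁ - 1) + (δ₂ * Δ + lam) / L₂ < Δ := by
  have hL₁' : 0 < L₁ - 1 := sub_pos.mpr hL₁
  rw [mul_div_assoc', lt_div_iff₀ (by linarith)] at hlam
  rw [div_add_div _ _ hL₁'.ne' hL₂.ne', div_lt_iff₀ (mul_pos hL₁' hL₂)]
  linarith

theorem tv_denoising_blurred_step_center_general (L₁ L₂ : ℤ) (hL₁ : 2 < L₁) (hL₂ : 2 < L₂)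
    (U₁ U₂ δ₁ δ₂ lam : ℝ) (hU : U₁ < U₂)
    (h1 : 0 ≤ δ₁) (h2 : 0 ≤ δ₂)
    (hlam1 : (U₂ - U₁) * max (((L₁ : ℝ) - 2) * δ₁) (((L₂ : ℝ) - 1) * δ₂) ≤ lam)
    (hlam2 : lam < (U₂ - U₁) *
      (((L₂ : ℝ) * ((L₁ : ℝ) - 1) - (L₂ : ℝ) * δ₁ - ((L₁ : ℝ) - 1) * δ₂) /
        ((L₁ : ℝ) + (L₂ : ℝ) - 1)))
    (f : ℤ → ℝ)
    (hf1 : ∀ x, -L₁ + 1 ≤ x → x ≤ -2 → f x = U₁)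
    (hfm1 : f (-1) = U₁ + δ₁ * (U₂ - U₁))
    (hf0 : f 0 = U₂ - δ₂ * (U₂ - U₁))
    (hf2 : ∀ x, 1 ≤ x → x ≤ L₂ - 1 → f x = U₂)
    (uh : ℤ → ℝ)
    (huh1 : ∀ x, -L₁ + 1 ≤ x → x ≤ -1 → uh x = U₁ + (δ₁ * (U₂ - U₁) + lam) / ((L₁ : ℝ) - 1))
    (huh2 : ∀ x, 0 ≤ x → x ≤ L₂ - 1 → uh x = U₂ - (δ₂ * (U₂ - U₁) + lam) / (L₂ : ℝ))
    (F : (ℤ → ℝ) → ℝ)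
    (hF : ∀ u, F u = (1/2) * ∑ x ∈ Finset.Icc (-L₁ + 1) (L₂ - 1), (u x - f x)^2
        + lam * ∑ x ∈ Finset.Icc (-L₁ + 1) (L₂ - 2), |u (x + 1) - u x|) :
    (∀ u : ℤ → ℝ, F uh ≤ F u) ∧
    (∀ u : ℤ → ℝ, F u = F uh → ∀ x ∈ Finset.Icc (-L₁ + 1) (L₂ - 1), u x = uh x) := by
  have hL₁' : (2 : ℝ) < L₁ := by exact_mod_cast hL₁
  have hL₂' : (2 : ℝ) < L₂ := by exact_mod_cast hL₂
  have hΔ : 0 < U₂ - U₁ := sub_pos.mpr hU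
  have hlamL := (mul_le_mul_of_nonneg_left (le_max_left _ _) hΔ.le).trans hlam1
  have hlamR := (mul_le_mul_of_nonneg_left (le_max_right _ _) hΔ.le).trans hlam1
  have hlam : 0 ≤ lam := (mul_nonneg hΔ.le (mul_nonneg (by linarith) h1)).trans hlamL
  have hL₁₁ : (0 : ℝ) < L₁ - 1 := by linarith
  have hL₂₀ : (0 : ℝ) < L₂ := by linarith
  have hcert := isTVDualCertificate_blurredStepDual (c₁ := δ₁ * (U₂ - U₁)) (by omega) (by omega)
    hf1 hfm1 hf0 hf2 huh1 huh2 (div_mul_cancel₀ _ hL₁₁.ne') (div_mul_cancel₀ _ hL₂₀.ne')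
    (div_nonneg (by positivity) hL₁₁.le) (div_nonneg (by positivity) hL₂₀.le)
    (by rw [← mul_div_assoc, div_le_iff₀ hL₁₁]; nlinarith)
    (by rw [le_div_iff₀ hL₂₀]; nlinarith)
    (blurredStep_contraction_add_lt (by linarith) hL₂₀ hlam2).le
  obtain rfl : F = tvEnergy f lam (-L₁ + 1) (L₂ - 1) :=
    funext fun u => by rw [hF, tvEnergy, show L₂ - 1 - 1 = L₂ - 2 by ring]
  exact ⟨hcert.tvEnergy_le, fun u => hcert.eqOn_of_tvEnergy_eq⟩

/-- Central branch of Proposition 1: for intermediate `λ`, the two-level signal with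
jump at `x = 0` and values contracted toward each other is the unique minimizer of the
1D TV denoising problem for the blurred step. -/
theorem tv_denoising_blurred_step_center (L₁ L₂ : ℤ) (hL₁ : 2 < L₁) (hL₂ : 2 < L₂)
    (U₁ U₂ δ₁ δ₂ lam : ℝ) (hU : U₁ < U₂)
    (h1 : 0 ≤ δ₁) (h2 : 0 ≤ δ₂) (h12 : δ₁ + δ₂ ≤ 1)
    (hlam1 : (U₂ - U₁) * max (((L₁ : ℝ) - 2) * δ₁) (((L₂ : ℝ) - 1) * δ₂) ≤ lam)
    (hlam2 : lam < (U₂ - U₁) *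
      (((L₂ : ℝ) * ((L₁ : ℝ) - 1) - (L₂ : ℝ) * δ₁ - ((L₁ : ℝ) - 1) * δ₂) /
        ((L₁ : ℝ) + (L₂ : ℝ) - 1)))
    (f : ℤ → ℝ)
    (hf1 : ∀ x, -L₁ + 1 ≤ x → x ≤ -2 → f x = U₁)
    (hfm1 : f (-1) = U₁ + δ₁ * (U₂ - U₁))
    (hf0 : f 0 = U₂ - δ₂ * (U₂ - U₁))
    (hf2 : ∀ x, 1 ≤ x → x ≤ L₂ - 1 → f x = U₂)
    (uh : ℤ → ℝ)
    (huh1 : ∀ x, -L₁ + 1 ≤ x → x ≤ -1 → uh x = U₁ + (δ₁ * (U₂ - U₁) + lam) / ((L₁ : ℝ) - 1))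
    (huh2 : ∀ x, 0 ≤ x → x ≤ L₂ - 1 → uh x = U₂ - (δ₂ * (U₂ - U₁) + lam) / (L₂ : ℝ))
    (F : (ℤ → ℝ) → ℝ)
    (hF : ∀ u, F u = (1/2) * ∑ x ∈ Finset.Icc (-L₁ + 1) (L₂ - 1), (u x - f x)^2
        + lam * ∑ x ∈ Finset.Icc (-L₁ + 1) (L₂ - 2), |u (x + 1) - u x|) :
    (∀ u : ℤ → ℝ, F uh ≤ F u) ∧
    (∀ u : ℤ → ℝ, F u = F uh → ∀ x ∈ Finset.Icc (-L₁ + 1) (L₂ - 1), u x = uh x) :=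
  tv_denoising_blurred_step_center_general L₁ L₂ hL₁ hL₂ U₁ U₂ δ₁ δ₂ lam hU h1 h2 hlam1 hlam2 f hf1
    hfm1 hf0 hf2 uh huh1 huh2 F hF
end
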